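/- For v, w in W_I with ς the minimal length coset representative of W_I ς: vς ≤ wς in Bruhat order on W if and only if v ≤ w in Bruhat order on W_I. -/

import Mathlib

open CoxeterSystem

variable {B W : Type*} [Group W] {M : CoxeterMatrix B}

/-- The Bruhat order on a Coxeter group: `u ≤ w` iff `w` is obtained from `u` by
repeatedly multiplying on the right by reflections that increase length. -/
def bruhatLE (cs : CoxeterSystem M W) (u w : W) : Prop :=
  Relation.ReflTransGen
    (fun a b => cs.length a < cs.length b ∧ ∃ t, cs.IsReflection t ∧ b = a * t) u w

/-- The standard parabolic subgroup generated by the simple reflections indexed by `I`. -/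
def parabolic (cs : CoxeterSystem M W) (I : Set B) : Subgroup W :=
  Subgroup.closure (cs.simple '' I)

/-- `ς` is a minimal length representative of its right coset `W_I ς`. -/
def IsMinCosetRep (cs : CoxeterSystem M W) (I : Set B) (ς : W) : Prop :=
  ∀ u ∈ parabolic cs I, cs.length ς ≤ cs.length (u * ς)

/-!
Write `w = π ω` and `ς = π γ` with reduced words, the letters of `ω` in `I`. Minimality of `ς`
enters through one observation: a subword of `γ` whose product lies in `W_I ς` is all of `γ`,
since its length is at least `ℓ ς = |γ|`. Applied to a reduced subword of `ω ++ γ` with the same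
product, it shows that `ω ++ γ` is reduced. The theorem then follows from the subword property of
the Bruhat order: if `u ≤ w`, every word for `w` has a subword for `u` (and a subword for `v ς` of
`ω ++ γ` must end with all of `γ`), while any subword of a reduced word gives an element below it.

The first half of the subword property rests on the strong exchange condition, obtained from the
reflection cocycle: `s_i ↦ (δ_{s_i}, s_i)` extends to a homomorphism `W → (W → ℤˣ) ⋊ W`, with `W`
acting by conjugating the argument, whose first component at a reflection `t` is `-1` exactly when
`t` is a left inversion, and is `1` at any `t` missing from the left inversion sequence of a word.
The second half follows from the lifting property: if `u ≤ w` then `s u ≤ w` or `s u ≤ s w`.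
-/

theorem pow_mul_mul_pow_inv_of_mul_self {G : Type*} [Group G] {a b : G} (ha : a * a = 1)
    (hb : b * b = 1) (k : ℕ) : (a * b) ^ k * a * ((a * b) ^ k)⁻¹ = (a * b) ^ (2 * k) * a := by
  have ha' : a⁻¹ = a := inv_eq_of_mul_eq_one_right ha
  have hb' : b⁻¹ = b := inv_eq_of_mul_eq_one_right hb
  have hconj : a * (a * b) * a⁻¹ = (a * b)⁻¹ := by
    rw [mul_inv_rev, ha', hb', ← mul_assoc, ha, one_mul]
  rw [← inv_pow, ← hconj, conj_pow, ha', two_mul, pow_add]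
  simp only [mul_assoc, ← mul_assoc a a, ha, one_mul]

namespace CoxeterSystem

noncomputable def conjPrecomp : W →* MulAut (W → ℤˣ) :=
  mulAutArrow.comp (ConjAct.toConjAct : W ≃* ConjAct W).toMonoidHom

theorem conjPrecomp_apply (x z : W) (f : W → ℤˣ) : conjPrecomp x f z = f (x⁻¹ * z * x) := by
  show f ((ConjAct.toConjAct x)⁻¹ • z) = _
  rw [← map_inv, ConjAct.toConjAct_smul, inv_inv]

variable (cs : CoxeterSystem M W)

local prefix:100 "s" => cs.simple
local prefix:100 "π" => cs.wordProd
local prefix:100 "ℓ" => cs.length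

section ReflectionCocycle

variable [DecidableEq W]

theorem conjPrecomp_mulSingle (x t : W) (a : ℤˣ) :
    conjPrecomp x (Pi.mulSingle t a) = Pi.mulSingle (x * t * x⁻¹) a := by
  ext z
  have : x⁻¹ * z * x = t ↔ z = x * t * x⁻¹ := by constructor <;> rintro rfl <;> group
  simp only [conjPrecomp_apply, Pi.mulSingle_apply, this]

noncomputable def cocycleGen (i : B) : (W → ℤˣ) ⋊[conjPrecomp] W :=
  ⟨Pi.mulSingle (s i) (-1), s i⟩

theorem cocycleGen_mul_pow (i j : B) (k : ℕ) : (cs.cocycleGen i * cs.cocycleGen j) ^ k =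
    ⟨∏ n ∈ Finset.range (2 * k), Pi.mulSingle ((s i * s j) ^ n * s i) (-1), (s i * s j) ^ k⟩ := by
  have hgen : cs.cocycleGen i * cs.cocycleGen j =
      ⟨Pi.mulSingle (s i) (-1) * Pi.mulSingle (s i * s j * s i) (-1), s i * s j⟩ := by
    ext : 1
    · simp [cocycleGen, conjPrecomp_mulSingle]
    · rfl
  induction k with
  | zero => ext : 1 <;> simp
  | succ k ih =>
    have hk := pow_mul_mul_pow_inv_of_mul_self (cs.simple_mul_simple_self i)
      (cs.simple_mul_simple_self j) k
    have hk' : (s i * s j) ^ k * (s i * s j * s i) * ((s i * s j) ^ k)⁻¹ =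
        (s i * s j) ^ (2 * k + 1) * s i := by
      rw [pow_succ', mul_assoc (s i * s j), ← hk, ← mul_assoc ((s i * s j) ^ k), pow_mul_comm']
      simp only [mul_assoc]
    rw [pow_succ, ih, hgen]
    ext : 1
    · simp only [SemidirectProduct.mul_left, map_mul, conjPrecomp_mulSingle, hk, hk']
      rw [show 2 * (k + 1) = 2 * k + 1 + 1 by ring, Finset.prod_range_succ, Finset.prod_range_succ,
        mul_assoc]
    · exact (pow_succ _ k).symm

theorem isLiftable_cocycleGen : M.IsLiftable cs.cocycleGen := by
  intro i j
  -- the factors for `n` and `M i j + n` coincide, and every element of `W → ℤˣ` squares to `1`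
  rw [cocycleGen_mul_pow, two_mul, Finset.prod_range_add]
  simp only [pow_add, cs.simple_mul_simple_pow, one_mul]
  ext : 1
  · exact funext fun z => Int.units_mul_self _
  · rfl

noncomputable def cocycleHom : W →* (W → ℤˣ) ⋊[conjPrecomp] W :=
  cs.lift ⟨cs.cocycleGen, cs.isLiftable_cocycleGen⟩

theorem right_cocycleHom (w : W) : (cs.cocycleHom w).right = w := by
  have : SemidirectProduct.rightHom.comp cs.cocycleHom = MonoidHom.id W :=
    cs.ext_simple fun i => by simp [cocycleHom, cocycleGen]
  exact DFunLike.congr_fun this w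

noncomputable def inversionSign (w : W) : W → ℤˣ := (cs.cocycleHom w).left

theorem inversionSign_mul (x y z : W) :
    cs.inversionSign (x * y) z = cs.inversionSign x z * cs.inversionSign y (x⁻¹ * z * x) := by
  simp [inversionSign, SemidirectProduct.mul_left, right_cocycleHom, conjPrecomp_apply]

theorem inversionSign_simple (i : B) : cs.inversionSign (s i) = Pi.mulSingle (s i) (-1) := by
  simp [inversionSign, cocycleHom, cocycleGen]

theorem inversionSign_self {t : W} (ht : cs.IsReflection t) : cs.inversionSign t t = -1 := by
  obtain ⟨x, i, hxi⟩ := ht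
  have hconj : x⁻¹ * t * x = s i := by rw [hxi]; group
  have key := congrArg (cs.inversionSign · t) (show t * x = x * s i by rw [hxi]; group)
  rw [inversionSign_mul, inversionSign_mul, inv_mul_cancel, one_mul, hconj, inversionSign_simple,
    Pi.mulSingle_eq_same, mul_comm] at key
  exact mul_left_cancel key

theorem inversionSign_wordProd_of_notMem {ω : List B} {t : W} (ht : t ∉ cs.leftInvSeq ω) :
    cs.inversionSign (π ω) t = 1 := by
  induction ω generalizing t with
  | nil => simp [inversionSign, cocycleHom]
  | cons i ω ih =>
    have hlis : cs.leftInvSeq (i :: ω) = s i :: (cs.leftInvSeq ω).map (MulAut.conj (s i)) := rfl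
    rw [hlis, List.mem_cons, List.mem_map, not_or] at ht
    rw [wordProd_cons, inversionSign_mul, inversionSign_simple, Pi.mulSingle_eq_of_ne ht.1, one_mul]
    refine ih fun hmem => ht.2 ⟨_, hmem, ?_⟩
    simp [mul_assoc]

theorem inversionSign_eq_neg_one_iff {t : W} (ht : cs.IsReflection t) (w : W) :
    cs.inversionSign w t = -1 ↔ cs.IsLeftInversion w t := by
  have mp (w : W) (h : cs.inversionSign w t = -1) : cs.IsLeftInversion w t := by
    obtain ⟨ω, hω, rfl⟩ := cs.exists_isReduced w
    by_cases hmem : t ∈ cs.leftInvSeq ω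
    · exact cs.isLeftInversion_of_mem_leftInvSeq hω hmem
    · rw [inversionSign_wordProd_of_notMem cs hmem] at h
      exact absurd h (by decide)
  refine ⟨mp w, fun h => ?_⟩
  -- otherwise `t` would be a left inversion of both `w` and `t * w`
  rcases Int.units_eq_one_or (cs.inversionSign w t) with h1 | h1
  · have : cs.inversionSign (t * w) t = -1 := by
      rw [inversionSign_mul, inv_mul_cancel, one_mul, h1, inversionSign_self cs ht, mul_one]
    exact absurd h (ht.isLeftInversion_mul_right_iff.1 (mp _ this))
  · exact h1

end ReflectionCocycle

theorem mem_leftInvSeq_of_isLeftInversion {ω : List B} {t : W}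
    (h : cs.IsLeftInversion (π ω) t) : t ∈ cs.leftInvSeq ω := by
  classical
  by_contra hmem
  have := (cs.inversionSign_eq_neg_one_iff h.1 _).2 h
  rw [inversionSign_wordProd_of_notMem cs hmem] at this
  exact absurd this (by decide)

theorem mem_rightInvSeq_of_isRightInversion {ω : List B} {t : W}
    (h : cs.IsRightInversion (π ω) t) : t ∈ cs.rightInvSeq ω := by
  rw [← isLeftInversion_inv_iff, ← wordProd_reverse] at h
  simpa [leftInvSeq_reverse] using cs.mem_leftInvSeq_of_isLeftInversion h

theorem exists_eraseIdx_of_isRightInversion {ω : List B} {t : W}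
    (h : cs.IsRightInversion (π ω) t) : ∃ j < ω.length, π ω * t = π (ω.eraseIdx j) := by
  obtain ⟨j, hj, rfl⟩ := List.mem_iff_getElem.1 (cs.mem_rightInvSeq_of_isRightInversion h)
  rw [length_rightInvSeq] at hj
  refine ⟨j, hj, ?_⟩
  rw [← List.getD_eq_getElem _ 1, wordProd_mul_getD_rightInvSeq]

theorem exists_reduced_sublist (ω : List B) : ∃ σ, σ.Sublist ω ∧ cs.IsReduced σ ∧ π σ = π ω := by
  induction ω using List.reverseRecOn with
  | nil => exact ⟨[], .slnil, by simp [IsReduced], rfl⟩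
  | append_singleton ω i ih =>
    obtain ⟨σ, hσω, hσ, hσπ⟩ := ih
    have hπ : π (σ ++ [i]) = π (ω ++ [i]) := by simp [wordProd_append, hσπ]
    rcases cs.length_mul_simple (π σ) i with hup | hdown
    · refine ⟨σ ++ [i], hσω.append (.refl _), ?_, hπ⟩
      simp [IsReduced, wordProd_append, hup, hσ.eq]
    · obtain ⟨j, hj, hje⟩ := cs.exists_eraseIdx_of_isRightInversion (ω := σ)
        ⟨cs.isReflection_simple i, by omega⟩
      refine ⟨σ.eraseIdx j, (σ.eraseIdx_sublist j).trans (hσω.trans (ω.sublist_append_left [i])),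
        ?_, ?_⟩
      · have := List.length_eraseIdx_add_one hj
        have := hσ.eq
        rw [IsReduced, ← hje]
        omega
      · rw [← hje, ← hπ, wordProd_append, wordProd_singleton]

theorem bruhatLE_mul_of_length_lt {x t : W} (ht : cs.IsReflection t) (h : ℓ x < ℓ (x * t)) :
    bruhatLE cs x (x * t) :=
  .single ⟨h, t, ht, rfl⟩

theorem simple_mul_bruhatLE_of_length_lt {x : W} {i : B} (h : ℓ (s i * x) < ℓ x) :
    bruhatLE cs (s i * x) x := by
  have ht : cs.IsReflection (x⁻¹ * s i * x) := by
    simpa using (cs.isReflection_simple i).conj x⁻¹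
  have hx : s i * x * (x⁻¹ * s i * x) = x := by simp [mul_assoc]
  simpa [hx] using cs.bruhatLE_mul_of_length_lt ht (x := s i * x) (by rwa [hx])

theorem wordProd_eraseIdx_bruhatLE {ω : List B} (hω : cs.IsReduced ω) (j : ℕ) :
    bruhatLE cs (π (ω.eraseIdx j)) (π ω) := by
  by_cases hj : j < ω.length
  · have ht : cs.IsReflection ((cs.rightInvSeq ω).getD j 1) := cs.isReflection_of_mem_rightInvSeq ω
      (by rw [List.getD_eq_getElem _ _ (by simpa)]; exact List.getElem_mem _)
    have hπ : π (ω.eraseIdx j) * (cs.rightInvSeq ω).getD j 1 = π ω := by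
      rw [← wordProd_mul_getD_rightInvSeq, mul_assoc, ht.mul_self, mul_one]
    have := List.length_eraseIdx_add_one hj
    have := cs.length_wordProd_le (ω.eraseIdx j)
    have := hω.eq
    rw [← hπ]
    exact cs.bruhatLE_mul_of_length_lt ht (by rw [hπ]; omega)
  · rw [List.eraseIdx_of_length_le (by omega)]
    exact .refl

theorem simple_mul_bruhatLE_or_of_length_lt {a t : W} (ht : cs.IsReflection t)
    (hat : ℓ a < ℓ (a * t)) (i : B) :
    bruhatLE cs (s i * a) (a * t) ∨ bruhatLE cs (s i * a) (s i * (a * t)) := by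
  rcases cs.length_simple_mul a i with hup | hdown
  swap
  · exact .inl ((cs.simple_mul_bruhatLE_of_length_lt (by omega)).trans
      (cs.bruhatLE_mul_of_length_lt ht hat))
  rcases lt_or_gt_of_ne (ht.length_mul_left_ne (s i * a)) with hdown' | hup'
  swap
  · rw [← mul_assoc]
    exact .inr (cs.bruhatLE_mul_of_length_lt ht hup')
  -- now `s i` is a left descent of `a * t`, and `a` arises by deleting a letter from the reduced
  -- word `i :: ω` of `a * t`
  obtain ⟨ω, hω, hωb⟩ := cs.exists_isReduced (s i * (a * t))
  have hb : π (i :: ω) = a * t := by rw [wordProd_cons, ← hωb, simple_mul_simple_cancel_left]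
  have hinv : cs.IsRightInversion (π (i :: ω)) t :=
    ⟨ht, by rwa [hb, mul_assoc, ht.mul_self, mul_one]⟩
  obtain ⟨j, -, hj⟩ := cs.exists_eraseIdx_of_isRightInversion hinv
  rw [hb, mul_assoc, ht.mul_self, mul_one] at hj
  cases j with
  | zero =>
    rw [List.eraseIdx_cons_zero] at hj
    have hsa : s i * a = a * t := by conv_lhs => rw [hj, ← hωb, simple_mul_simple_cancel_left]
    rw [hsa]
    exact .inl .refl
  | succ j =>
    rw [List.eraseIdx_cons_succ, wordProd_cons] at hj
    have hsa : s i * a = π (ω.eraseIdx j) := by rw [hj, simple_mul_simple_cancel_left]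
    rw [hsa, hωb]
    exact .inr (cs.wordProd_eraseIdx_bruhatLE hω j)

theorem simple_mul_bruhatLE_or {a b : W} (h : bruhatLE cs a b) (i : B) :
    bruhatLE cs (s i * a) b ∨ bruhatLE cs (s i * a) (s i * b) := by
  induction h with
  | refl => exact .inr .refl
  | @tail b c _ hbc ih =>
    obtain ⟨hlt, t, ht, rfl⟩ := hbc
    have hstep := cs.bruhatLE_mul_of_length_lt ht hlt
    rcases ih with h | h
    · exact .inl (h.trans hstep)
    · exact (cs.simple_mul_bruhatLE_or_of_length_lt ht hlt i).imp h.trans h.trans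

theorem wordProd_bruhatLE_of_sublist {σ ω : List B} (hω : cs.IsReduced ω) (h : σ.Sublist ω) :
    bruhatLE cs (π σ) (π ω) := by
  induction ω generalizing σ with
  | nil => rw [List.sublist_nil.1 h]; exact .refl
  | cons i ω ih =>
    have hω' : cs.IsReduced ω := by simpa using hω.drop 1
    have hlen : ℓ (s i * π (i :: ω)) < ℓ (π (i :: ω)) := by
      rw [hω.eq, wordProd_cons, simple_mul_simple_cancel_left, hω'.eq]
      simp
    have hstep : bruhatLE cs (π ω) (π (i :: ω)) := by
      simpa [wordProd_cons] using cs.simple_mul_bruhatLE_of_length_lt hlen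
    rcases List.sublist_cons_iff.1 h with h | ⟨σ', rfl, h'⟩
    · exact (ih hω' h).trans hstep
    · rw [wordProd_cons, wordProd_cons]
      rcases cs.simple_mul_bruhatLE_or (ih hω' h') i with h | h
      · exact h.trans (by rwa [← wordProd_cons])
      · exact h

theorem exists_sublist_of_bruhatLE {u w : W} (h : bruhatLE cs u w) {ω : List B} (hω : π ω = w) :
    ∃ σ, σ.Sublist ω ∧ π σ = u := by
  induction h generalizing ω with
  | refl => exact ⟨ω, .refl ω, hω⟩
  | @tail b c _ hbc ih =>
    obtain ⟨hlt, t, ht, rfl⟩ := hbc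
    have hb : π ω * t = b := by rw [hω, mul_assoc, ht.mul_self, mul_one]
    obtain ⟨j, -, hj⟩ := cs.exists_eraseIdx_of_isRightInversion (ω := ω) ⟨ht, by rwa [hb, hω]⟩
    obtain ⟨σ, hσ, hσu⟩ := ih (ω := ω.eraseIdx j) (hj ▸ hb)
    exact ⟨σ, hσ.trans (ω.eraseIdx_sublist j), hσu⟩

variable (I : Set B)

theorem wordProd_mem_parabolic {ω : List B} (hω : ∀ i ∈ ω, i ∈ I) : π ω ∈ parabolic cs I := by
  induction ω with
  | nil => exact Subgroup.one_mem _
  | cons i ω ih =>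
    rw [wordProd_cons]
    exact Subgroup.mul_mem _ (Subgroup.subset_closure ⟨i, hω i List.mem_cons_self, rfl⟩)
      (ih fun j hj => hω j (List.mem_cons_of_mem i hj))

theorem exists_reduced_word_of_mem_parabolic {u : W} (hu : u ∈ parabolic cs I) :
    ∃ ω : List B, (∀ i ∈ ω, i ∈ I) ∧ cs.IsReduced ω ∧ π ω = u := by
  suffices ∃ ω : List B, (∀ i ∈ ω, i ∈ I) ∧ π ω = u by
    obtain ⟨ω, hωI, rfl⟩ := this
    obtain ⟨σ, hσω, hσ, hσπ⟩ := cs.exists_reduced_sublist ω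
    exact ⟨σ, fun i hi => hωI i (hσω.subset hi), hσ, hσπ⟩
  induction hu using Subgroup.closure_induction with
  | mem x hx =>
    obtain ⟨i, hi, rfl⟩ := hx
    exact ⟨[i], by simpa using hi, wordProd_singleton cs i⟩
  | one => exact ⟨[], by simp, wordProd_nil cs⟩
  | mul x y _ _ hx hy =>
    obtain ⟨ω₁, h₁, rfl⟩ := hx
    obtain ⟨ω₂, h₂, rfl⟩ := hy
    exact ⟨ω₁ ++ ω₂, by simpa [or_imp, forall_and] using ⟨h₁, h₂⟩, wordProd_append cs ω₁ ω₂⟩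
  | inv x _ hx =>
    obtain ⟨ω, hω, rfl⟩ := hx
    exact ⟨ω.reverse, by simpa using hω, wordProd_reverse cs ω⟩

variable {cs I}

theorem _root_.IsMinCosetRep.eq_of_sublist {ρ₁ ρ₂ γ : List B} (hς : IsMinCosetRep cs I (π γ))
    (hγ : cs.IsReduced γ) (hρ₁ : ∀ i ∈ ρ₁, i ∈ I) (hρ₂ : ρ₂.Sublist γ) {x : W}
    (hx : x ∈ parabolic cs I) (h : π ρ₁ * π ρ₂ = x * π γ) : ρ₂ = γ := by
  have hu : (π ρ₁)⁻¹ * x ∈ parabolic cs I :=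
    Subgroup.mul_mem _ (Subgroup.inv_mem _ (cs.wordProd_mem_parabolic I hρ₁)) hx
  refine hρ₂.eq_of_length (le_antisymm hρ₂.length_le ?_)
  calc γ.length = ℓ (π γ) := hγ.eq.symm
    _ ≤ ℓ ((π ρ₁)⁻¹ * x * π γ) := hς _ hu
    _ = ℓ (π ρ₂) := by rw [mul_assoc, ← h, inv_mul_cancel_left]
    _ ≤ ρ₂.length := cs.length_wordProd_le ρ₂

theorem _root_.IsMinCosetRep.isReduced_append {ω γ : List B} (hς : IsMinCosetRep cs I (π γ))
    (hωI : ∀ i ∈ ω, i ∈ I) (hω : cs.IsReduced ω) (hγ : cs.IsReduced γ) :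
    cs.IsReduced (ω ++ γ) := by
  obtain ⟨ρ, hρ, hρred, hρπ⟩ := cs.exists_reduced_sublist (ω ++ γ)
  obtain ⟨ρ₁, ρ₂, rfl, h₁, h₂⟩ := List.sublist_append_iff.1 hρ
  rw [wordProd_append, wordProd_append] at hρπ
  obtain rfl : ρ₂ = γ := hς.eq_of_sublist hγ (fun i hi => hωI i (h₁.subset hi)) h₂
    (cs.wordProd_mem_parabolic I hωI) hρπ
  obtain rfl : ρ₁ = ω := by
    refine h₁.eq_of_length (le_antisymm h₁.length_le ?_)
    rw [← hω.eq, ← mul_right_cancel hρπ]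
    exact cs.length_wordProd_le ρ₁
  exact hρred

end CoxeterSystem

/-- For v, w ∈ W_I and ς the minimal length coset representative of W_I ς:
vς ≤ wς in Bruhat order if and only if v ≤ w. -/
theorem bruhatLE_mul_minCosetRep_iff (cs : CoxeterSystem M W) (I : Set B) (ς : W)
    (hς : IsMinCosetRep cs I ς) (v w : W)
    (hv : v ∈ parabolic cs I) (hw : w ∈ parabolic cs I) :
    bruhatLE cs (v * ς) (w * ς) ↔ bruhatLE cs v w := by
  obtain ⟨γ, hγ, rfl⟩ := cs.exists_isReduced ς
  obtain ⟨ω, hωI, hω, rfl⟩ := cs.exists_reduced_word_of_mem_parabolic I hw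
  constructor
  · intro h
    obtain ⟨τ, hτ, hτπ⟩ := cs.exists_sublist_of_bruhatLE h (wordProd_append cs ω γ)
    obtain ⟨τ₁, τ₂, rfl, h₁, h₂⟩ := List.sublist_append_iff.1 hτ
    rw [wordProd_append] at hτπ
    obtain rfl : τ₂ = γ := hς.eq_of_sublist hγ (fun i hi => hωI i (h₁.subset hi)) h₂ hv hτπ
    obtain rfl : cs.wordProd τ₁ = v := mul_right_cancel hτπ
    exact cs.wordProd_bruhatLE_of_sublist hω h₁
  · intro h
    obtain ⟨σ, hσ, rfl⟩ := cs.exists_sublist_of_bruhatLE h rfl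
    rw [← wordProd_append, ← wordProd_append]
    exact cs.wordProd_bruhatLE_of_sublist (hς.isReduced_append hωI hω hγ) (hσ.append (.refl γ))
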